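/- Assume Condition 2 (quasi-spiked covariance structure): λ_k ≥ λ_{k+1} + d and λ_{k+1} − λ_p ≤ ε for some d, ε > 0. If δ ∈ W_1 = span{ξ_1, ..., ξ_k}, then the eigenvalues η_1 ≥ ... ≥ η_p of Σ^tot satisfy η_k ≥ η_{k+1} + d. (Lemma 4, first case) -/
import Mathlib


open Matrix

open Finset
section helpers

variable {p : ℕ}

lemma myDot_self_pos {x : Fin p → ℝ} (hx : x ≠ 0) : 0 < x ⬝ᵥ x := by
  have h0 : (0:ℝ) ≤ x ⬝ᵥ x := Finset.sum_nonneg fun i _ => mul_self_nonneg _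
  rcases h0.lt_or_eq with h | h
  · exact h
  · exact absurd (dotProduct_self_eq_zero.mp h.symm) hx

lemma vecMulVec_mulVec' (u v x : Fin p → ℝ) :
    (vecMulVec u v).mulVec x = (v ⬝ᵥ x) • u := by
  funext i
  simp [Matrix.mulVec, vecMulVec_apply, dotProduct, Finset.mul_sum, mul_comm, mul_left_comm]

/-- quadratic form representation on span of orthonormal eigenvectors -/
lemma sum_dotProduct' {ι : Type} (s : Finset ι) (f : ι → Fin p → ℝ) (x : Fin p → ℝ) :
    (∑ i ∈ s, f i) ⬝ᵥ x = ∑ i ∈ s, f i ⬝ᵥ x := by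
  simp only [dotProduct, Finset.sum_apply, Finset.sum_mul]
  rw [Finset.sum_comm]

lemma dotProduct_sum' {ι : Type} (s : Finset ι) (f : ι → Fin p → ℝ) (x : Fin p → ℝ) :
    x ⬝ᵥ (∑ i ∈ s, f i) = ∑ i ∈ s, x ⬝ᵥ f i := by
  simp only [dotProduct, Finset.sum_apply, Finset.mul_sum]
  rw [Finset.sum_comm]

lemma quad_repr {ι : Type} [Fintype ι] [DecidableEq ι] (T : Matrix (Fin p) (Fin p) ℝ)
    (w : ι → Fin p → ℝ) (μ : ι → ℝ)
    (horth : ∀ i j, w i ⬝ᵥ w j = if i = j then (1:ℝ) else 0)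
    (heig : ∀ i, T.mulVec (w i) = μ i • w i)
    {x : Fin p → ℝ} (hx : x ∈ Submodule.span ℝ (Set.range w)) :
    ∃ a : ι → ℝ, (x ⬝ᵥ T.mulVec x = ∑ i, μ i * a i ^ 2) ∧ (x ⬝ᵥ x = ∑ i, a i ^ 2) := by
  obtain ⟨a, ha⟩ := (Submodule.mem_span_range_iff_exists_fun ℝ).mp hx
  refine ⟨a, ?_, ?_⟩
  · have hTx : T.mulVec x = ∑ i, (a i * μ i) • w i := by
      rw [← ha, ← Matrix.mulVecLin_apply, map_sum]
      refine Finset.sum_congr rfl fun i _ => ?_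
      rw [_root_.map_smul, Matrix.mulVecLin_apply, heig, smul_smul]
    rw [hTx, ← ha, sum_dotProduct']
    refine Finset.sum_congr rfl fun i _ => ?_
    rw [dotProduct_sum']
    simp only [smul_dotProduct, dotProduct_smul, horth, smul_eq_mul, mul_ite, mul_one,
      mul_zero, Finset.sum_ite_eq, Finset.mem_univ, if_true]
    ring
  · rw [← ha, sum_dotProduct']
    refine Finset.sum_congr rfl fun i _ => ?_
    rw [dotProduct_sum']
    simp only [smul_dotProduct, dotProduct_smul, horth, smul_eq_mul, mul_ite, mul_one,
      mul_zero, Finset.sum_ite_eq, Finset.mem_univ, if_true]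
    ring

lemma quad_le {ι : Type} [Fintype ι] [DecidableEq ι] (T : Matrix (Fin p) (Fin p) ℝ)
    (w : ι → Fin p → ℝ) (μ : ι → ℝ)
    (horth : ∀ i j, w i ⬝ᵥ w j = if i = j then (1:ℝ) else 0)
    (heig : ∀ i, T.mulVec (w i) = μ i • w i) (c : ℝ) (hc : ∀ i, μ i ≤ c)
    {x : Fin p → ℝ} (hx : x ∈ Submodule.span ℝ (Set.range w)) :
    x ⬝ᵥ T.mulVec x ≤ c * (x ⬝ᵥ x) := by
  obtain ⟨a, h1, h2⟩ := quad_repr T w μ horth heig hx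
  rw [h1, h2, Finset.mul_sum]
  exact Finset.sum_le_sum fun i _ => mul_le_mul_of_nonneg_right (hc i) (sq_nonneg _)

lemma quad_ge {ι : Type} [Fintype ι] [DecidableEq ι] (T : Matrix (Fin p) (Fin p) ℝ)
    (w : ι → Fin p → ℝ) (μ : ι → ℝ)
    (horth : ∀ i j, w i ⬝ᵥ w j = if i = j then (1:ℝ) else 0)
    (heig : ∀ i, T.mulVec (w i) = μ i • w i) (c : ℝ) (hc : ∀ i, c ≤ μ i)
    {x : Fin p → ℝ} (hx : x ∈ Submodule.span ℝ (Set.range w)) :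
    c * (x ⬝ᵥ x) ≤ x ⬝ᵥ T.mulVec x := by
  obtain ⟨a, h1, h2⟩ := quad_repr T w μ horth heig hx
  rw [h1, h2, Finset.mul_sum]
  exact Finset.sum_le_sum fun i _ => mul_le_mul_of_nonneg_right (hc i) (sq_nonneg _)

lemma orth_li {ι : Type} [Fintype ι] [DecidableEq ι] (w : ι → Fin p → ℝ)
    (horth : ∀ i j, w i ⬝ᵥ w j = if i = j then (1:ℝ) else 0) :
    LinearIndependent ℝ w := by
  rw [linearIndependent_iff']
  intro s g hg i hi
  have h := congrArg (fun y => y ⬝ᵥ w i) hg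
  simp only [sum_dotProduct', smul_dotProduct, zero_dotProduct] at h
  have h2 : ∀ j ∈ s, g j • (w j ⬝ᵥ w i) = g j • (if j = i then (1:ℝ) else 0) :=
    fun j _ => by rw [horth j i]
  rw [Finset.sum_congr rfl h2] at h
  simp only [smul_eq_mul, mul_ite, mul_one, mul_zero, Finset.sum_ite_eq', hi, if_true] at h
  exact h

lemma exists_ne_zero_mem_inf (U W : Submodule ℝ (Fin p → ℝ))
    (h : p < Module.finrank ℝ U + Module.finrank ℝ W) :
    ∃ x : Fin p → ℝ, x ≠ 0 ∧ x ∈ U ∧ x ∈ W := by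
  have hsum := Submodule.finrank_sup_add_finrank_inf_eq U W
  have hle : Module.finrank ℝ ↥(U ⊔ W) ≤ p := by
    have := Submodule.finrank_le (U ⊔ W)
    simpa [Module.finrank_pi] using this
  have hpos : 0 < Module.finrank ℝ ↥(U ⊓ W) := by omega
  have : Nontrivial ↥(U ⊓ W) := Module.nontrivial_of_finrank_pos hpos
  obtain ⟨x, hx⟩ := exists_ne (0 : ↥(U ⊓ W))
  exact ⟨x.1, by simpa [Submodule.coe_eq_zero] using hx, x.2.1, x.2.2⟩

end helpers

section main

lemma orth_comp {p : ℕ} {ι κ : Type} [DecidableEq ι] [DecidableEq κ] (w : ι → Fin p → ℝ)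
    (horth : ∀ i j, w i ⬝ᵥ w j = if i = j then (1:ℝ) else 0)
    (e : κ → ι) (he : Function.Injective e) :
    ∀ i j, w (e i) ⬝ᵥ w (e j) = if i = j then (1:ℝ) else 0 := fun i j => by
  rw [horth]; exact if_congr he.eq_iff rfl rfl

/-- Lemma 4 (first case): under Condition 2, if `δ ∈ W₁ = span{ξ_1,...,ξ_k}`,
then the eigenvalues of `Σᵗᵒᵗ = Σ + ρ δ δᵀ` satisfy `η_k ≥ η_{k+1} + d`. -/
theorem total_covariance_eigengap_delta_in_W1
    {p k : ℕ} (hk : 1 ≤ k) (hkp : k < p)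
    (S : Matrix (Fin p) (Fin p) ℝ) (hS : S.IsSymm)
    (lam : Fin p → ℝ) (xi : Fin p → (Fin p → ℝ))
    (hpos : ∀ j, 0 < lam j)
    (hdesc : ∀ i j : Fin p, i ≤ j → lam j ≤ lam i)
    (horth : ∀ i j : Fin p, xi i ⬝ᵥ xi j = if i = j then (1 : ℝ) else 0)
    (heig : ∀ j, S.mulVec (xi j) = lam j • xi j)
    (δ : Fin p → ℝ) (ρ : ℝ) (hρ : 0 < ρ)
    -- η are the eigenvalues of Σᵗᵒᵗ in descending order
    (η : Fin p → ℝ) (hηdesc : ∀ i j : Fin p, i ≤ j → η j ≤ η i)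
    (V : Matrix (Fin p) (Fin p) ℝ) (hV : Vᵀ * V = 1)
    (hdiag : Vᵀ * (S + ρ • vecMulVec δ δ) * V = Matrix.diagonal η)
    -- Condition 2 (quasi-spiked covariance structure)
    (d ε : ℝ) (hd : 0 < d) (hε : 0 < ε)
    (hgap : lam ⟨k, hkp⟩ + d ≤ lam ⟨k - 1, by omega⟩)
    (hquasi : lam ⟨k, hkp⟩ - lam ⟨p - 1, by omega⟩ ≤ ε)
    -- δ ∈ W₁
    (hmem : δ ∈ Submodule.span ℝ
      (Set.range fun i : Fin k => xi ⟨i.1, lt_trans i.isLt hkp⟩)) :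
    η ⟨k, hkp⟩ + d ≤ η ⟨k - 1, by omega⟩ := by
  set T : Matrix (Fin p) (Fin p) ℝ := S + ρ • vecMulVec δ δ with hTdef
  have hVVT : V * Vᵀ = 1 := mul_eq_one_comm.mp hV
  have hT : T = V * Matrix.diagonal η * Vᵀ := by
    have h1 : V * (Vᵀ * T * V) * Vᵀ = T := by
      have : V * (Vᵀ * T * V) * Vᵀ = (V * Vᵀ) * T * (V * Vᵀ) := by
        simp only [Matrix.mul_assoc]
      rw [this, hVVT, Matrix.one_mul, Matrix.mul_one]
    rw [← h1, hdiag]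
  -- columns of V
  set v : Fin p → Fin p → ℝ := fun j i => V i j with hvdef
  have hvorth : ∀ i j, v i ⬝ᵥ v j = if i = j then (1:ℝ) else 0 := by
    intro i j
    have := congrFun (congrFun hV i) j
    simpa [Matrix.mul_apply, Matrix.transpose_apply, dotProduct, Matrix.one_apply,
      hvdef] using this
  have hveig : ∀ j, T.mulVec (v j) = η j • v j := by
    intro j; funext i
    have h1 : (T * V) i j = (V * Matrix.diagonal η) i j := by
      rw [hT]
      have : V * Matrix.diagonal η * Vᵀ * V = V * Matrix.diagonal η * (Vᵀ * V) := by
        simp only [Matrix.mul_assoc]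
      rw [this, hV, Matrix.mul_one]
    rw [Matrix.mul_apply, Matrix.mul_diagonal] at h1
    simpa [Matrix.mulVec, dotProduct, hvdef, mul_comm] using h1
  -- δ is orthogonal to the trailing eigenvectors
  have hδorth : ∀ j : Fin p, k ≤ j.1 → δ ⬝ᵥ xi j = 0 := by
    intro j hj
    obtain ⟨a, ha⟩ := (Submodule.mem_span_range_iff_exists_fun ℝ).mp hmem
    rw [← ha, sum_dotProduct']
    refine Finset.sum_eq_zero fun i _ => ?_
    rw [smul_dotProduct, horth]
    have hne : (⟨i.1, lt_trans i.isLt hkp⟩ : Fin p) ≠ j := by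
      intro h
      have := congrArg Fin.val h
      simp only at this
      omega
    simp [hne]
  have hTxi : ∀ j : Fin p, k ≤ j.1 → T.mulVec (xi j) = lam j • xi j := by
    intro j hj
    rw [hTdef, Matrix.add_mulVec, Matrix.smul_mulVec, vecMulVec_mulVec',
      hδorth j hj, heig]
    simp
  -- Claim B : η_k ≤ lam_k
  have hB : η ⟨k, hkp⟩ ≤ lam ⟨k, hkp⟩ := by
    by_contra hlt
    push_neg at hlt
    set e1 : Fin (k+1) → Fin p := fun i => ⟨i.1, by omega⟩ with he1
    set e2 : Fin (p-k) → Fin p := fun i => ⟨k + i.1, by omega⟩ with he2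
    have he1inj : Function.Injective e1 := fun i j h => by
      have := congrArg Fin.val h; simpa [he1, Fin.ext_iff] using this
    have he2inj : Function.Injective e2 := fun i j h => by
      have := congrArg Fin.val h; simp only [he2] at this
      exact Fin.ext (by omega)
    have ho1 := orth_comp v hvorth e1 he1inj
    have ho2 := orth_comp xi horth e2 he2inj
    obtain ⟨x, hx0, hxU, hxW⟩ := exists_ne_zero_mem_inf
      (Submodule.span ℝ (Set.range fun i => v (e1 i)))
      (Submodule.span ℝ (Set.range fun i => xi (e2 i)))
      (by
        rw [finrank_span_eq_card (orth_li _ ho1), finrank_span_eq_card (orth_li _ ho2)]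
        simp only [Fintype.card_fin]; omega)
    have h1 : η ⟨k, hkp⟩ * (x ⬝ᵥ x) ≤ x ⬝ᵥ T.mulVec x :=
      quad_ge T _ (fun i => η (e1 i)) ho1 (fun i => hveig (e1 i)) _
        (fun i => hηdesc (e1 i) ⟨k, hkp⟩ (by simp [he1, Fin.le_def]; omega)) hxU
    have h2 : x ⬝ᵥ T.mulVec x ≤ lam ⟨k, hkp⟩ * (x ⬝ᵥ x) :=
      quad_le T _ (fun i => lam (e2 i)) ho2
        (fun i => hTxi (e2 i) (by simp [he2])) _
        (fun i => hdesc ⟨k, hkp⟩ (e2 i) (by simp [he2, Fin.le_def])) hxW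
    have hxx := myDot_self_pos hx0
    nlinarith
  -- Claim A : lam_{k-1} ≤ η_{k-1}
  have hA : lam ⟨k - 1, by omega⟩ ≤ η ⟨k - 1, by omega⟩ := by
    by_contra hlt
    push_neg at hlt
    set f1 : Fin (p-(k-1)) → Fin p := fun i => ⟨k - 1 + i.1, by omega⟩ with hf1
    set f2 : Fin k → Fin p := fun i => ⟨i.1, by omega⟩ with hf2
    have hf1inj : Function.Injective f1 := fun i j h => by
      have := congrArg Fin.val h; simp only [hf1] at this
      exact Fin.ext (by omega)
    have hf2inj : Function.Injective f2 := fun i j h => by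
      have := congrArg Fin.val h; simpa [hf2, Fin.ext_iff] using this
    have ho1 := orth_comp v hvorth f1 hf1inj
    have ho2 := orth_comp xi horth f2 hf2inj
    obtain ⟨x, hx0, hxU, hxW⟩ := exists_ne_zero_mem_inf
      (Submodule.span ℝ (Set.range fun i => v (f1 i)))
      (Submodule.span ℝ (Set.range fun i => xi (f2 i)))
      (by
        rw [finrank_span_eq_card (orth_li _ ho1), finrank_span_eq_card (orth_li _ ho2)]
        simp only [Fintype.card_fin]; omega)
    have h1 : x ⬝ᵥ T.mulVec x ≤ η ⟨k - 1, by omega⟩ * (x ⬝ᵥ x) :=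
      quad_le T _ (fun i => η (f1 i)) ho1 (fun i => hveig (f1 i)) _
        (fun i => hηdesc ⟨k - 1, by omega⟩ (f1 i) (by simp [hf1, Fin.le_def])) hxU
    have h2 : lam ⟨k - 1, by omega⟩ * (x ⬝ᵥ x) ≤ x ⬝ᵥ S.mulVec x :=
      quad_ge S _ (fun i => lam (f2 i)) ho2 (fun i => heig (f2 i)) _
        (fun i => hdesc (f2 i) ⟨k - 1, by omega⟩ (by simp [hf2, Fin.le_def]; omega)) hxW
    have h3 : x ⬝ᵥ S.mulVec x ≤ x ⬝ᵥ T.mulVec x := by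
      rw [hTdef, Matrix.add_mulVec, dotProduct_add, Matrix.smul_mulVec,
        vecMulVec_mulVec']
      have : x ⬝ᵥ (ρ • (δ ⬝ᵥ x) • δ) = ρ * ((δ ⬝ᵥ x) * (δ ⬝ᵥ x)) := by
        rw [dotProduct_smul, dotProduct_smul, smul_eq_mul, smul_eq_mul,
          dotProduct_comm x δ]
      rw [this]
      nlinarith [mul_self_nonneg (δ ⬝ᵥ x)]
    have hxx := myDot_self_pos hx0
    nlinarith
  calc η ⟨k, hkp⟩ + d ≤ lam ⟨k, hkp⟩ + d := by linarith
    _ ≤ lam ⟨k - 1, by omega⟩ := hgap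
    _ ≤ η ⟨k - 1, by omega⟩ := hA
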